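/- arXiv:1903.07837 — 3 statements merged into one kernel-verified Lean document; each statement's English description precedes it below -/
import Mathlib

section
/- Let M = (Q, n1, n2, ⇒, q0, qf, I) be a two-counter Minsky machine and let (A, R, Rp, A0, ↪) be its APA encoding. For all q, q' ∈ Q, all m1, m2, m1', m2' ∈ ℕ and all k ∈ ℕ, if ⇒^k((q, m1, m2)) = (q', m1', m2'), then there exists a finite sequence of APA transitions (each with respect to an arbitrary reference set Ax ⊆ A) from the state F(A^I ∪ {σQ(q), σ1(m1), σ2(m2)}) to the state F(A^I ∪ {σQ(q'), σ1(m1'), σ2(m2')}). In particular, the APA encoding simulates M. -/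
/-- A two-counter Minsky machine over a state type `Q`.  An instruction
`(q1, i, q2, u)` has source state `q1 ≠ qf`, counter index `i ∈ {1,2}`,
target state `q2` and optional alternative target `u : Option Q`
(`none` playing the role of `ε`). -/
structure Minsky (Q : Type*) where
  n1 : ℕ
  n2 : ℕ
  q0 : Q
  qf : Q
  I : Set (Q × ℕ × Q × Option Q)
  I_idx : ∀ x ∈ I, x.2.1 = 1 ∨ x.2.1 = 2
  I_src : ∀ x ∈ I, x.1 ≠ qf
  I_total : ∀ q : Q, q ≠ qf → ∃ i q2 u, (q, i, q2, u) ∈ I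

/-- The one-step relation `⇒` of a two-counter Minsky machine. -/
inductive Minsky.Step {Q : Type*} (M : Minsky Q) : Q × ℕ × ℕ → Q × ℕ × ℕ → Prop
  | inc1 {q1 q2 : Q} {m1 m2 : ℕ} : (q1, 1, q2, (none : Option Q)) ∈ M.I →
      M.Step (q1, m1, m2) (q2, m1 + 1, m2)
  | inc2 {q1 q2 : Q} {m1 m2 : ℕ} : (q1, 2, q2, (none : Option Q)) ∈ M.I →
      M.Step (q1, m1, m2) (q2, m1, m2 + 1)
  | dec1 {q1 q2 q3 : Q} {m1 m2 : ℕ} : (q1, 1, q2, some q3) ∈ M.I → 0 < m1 →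
      M.Step (q1, m1, m2) (q3, m1 - 1, m2)
  | dec2 {q1 q2 q3 : Q} {m1 m2 : ℕ} : (q1, 2, q2, some q3) ∈ M.I → 0 < m2 →
      M.Step (q1, m1, m2) (q3, m1, m2 - 1)
  | zero1 {q1 q2 q3 : Q} {m2 : ℕ} : (q1, 1, q2, some q3) ∈ M.I →
      M.Step (q1, 0, m2) (q2, 0, m2)
  | zero2 {q1 q2 q3 : Q} {m1 : ℕ} : (q1, 2, q2, some q3) ∈ M.I →
      M.Step (q1, m1, 0) (q2, m1, 0)

/-- `M.StepN k c c'` says `⇒^k(c) = c'`, i.e. `c'` is obtained from `c`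
by exactly `k` Minsky machine steps. -/
def Minsky.StepN {Q : Type*} (M : Minsky Q) : ℕ → Q × ℕ × ℕ → Q × ℕ × ℕ → Prop
  | 0, c, c' => c = c'
  | k + 1, c, c' => ∃ c'', M.Step c c'' ∧ M.StepN k c'' c'

/-- An Abstract Persuasion Argumentation framework over the argument type `α`:
an attack relation `R`, a persuasion relation `Rp ⊆ A × (A ∪ {ε}) × A`
(`none` playing the role of `ε`), and an initial set `A0`.
A state `F(A1)` is identified with the set `A1 ⊆ A` of visible arguments
(since the state is `(A1, R ∩ (A1 × A1))`, a function of `A1`). -/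
structure APA (α : Type*) where
  R : Set (α × α)
  Rp : Set (α × Option α × α)
  A0 : Set α

namespace APA

variable {α : Type*} (F : APA α)

/-- `a1` attacks `a2` in the state `F(A1)`. -/
def Attacks (A1 : Set α) (a1 a2 : α) : Prop :=
  a1 ∈ A1 ∧ a2 ∈ A1 ∧ (a1, a2) ∈ F.R

/-- `Γ^{Ax}_{F(A1)}`: members `(a1, α, a2)` of `Rp` with `a1 ∈ A1`,
`α ∈ {ε} ∪ A1`, and `a1` not attacked in `F(A1)` by any member of `Ax`. -/
def gamma (Ax A1 : Set α) : Set (α × Option α × α) :=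
  {t | t ∈ F.Rp ∧ t.1 ∈ A1 ∧ (∀ a : α, t.2.1 = some a → a ∈ A1) ∧
    ∀ b ∈ Ax, ¬ F.Attacks A1 b t.1}

/-- `neg^{A1}(Γ)`. -/
def neg (A1 : Set α) (Γ : Set (α × Option α × α)) : Set α :=
  {ax | ax ∈ A1 ∧ ∃ a1 ∈ A1, ∃ a2 : α, (a1, some ax, a2) ∈ Γ}

/-- `pos^{A1}(Γ)`. -/
def pos (A1 : Set α) (Γ : Set (α × Option α × α)) : Set α :=
  {a2 | ∃ a1 ∈ A1, ∃ m : Option α, (∀ a : α, m = some a → a ∈ A1) ∧ (a1, m, a2) ∈ Γ}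

/-- The transition `F(A1) ↪^{Ax} F(A2)` effected by the specific nonempty
`Γ ⊆ Γ^{Ax}_{F(A1)}`. -/
def TransVia (Ax : Set α) (Γ : Set (α × Option α × α)) (A1 A2 : Set α) : Prop :=
  Γ.Nonempty ∧ Γ ⊆ F.gamma Ax A1 ∧ A2 = (A1 \ neg A1 Γ) ∪ pos A1 Γ

/-- The transition relation `F(A1) ↪^{Ax} F(A2)`. -/
def Trans (Ax A1 A2 : Set α) : Prop :=
  ∃ Γ : Set (α × Option α × α), F.TransVia Ax Γ A1 A2

/-- A state `F(A1)` is reachable iff it is obtained from the initial state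
`F(A0)` by a finite sequence of transitions (with arbitrary reference sets). -/
def Reachable (A1 : Set α) : Prop :=
  Relation.ReflTransGen (fun X Y => ∃ Ax : Set α, F.Trans Ax X Y) F.A0 A1

end APA

/-- `sigC σ1 σ2 i` is `σi` for `i ∈ {1, 2}`. -/
def sigC {α : Type*} (σ1 σ2 : ℕ → α) (i : ℕ) : ℕ → α :=
  if i = 1 then σ1 else σ2

/-- The persuasion relation of the APA encoding of a Minsky machine `M`. -/
def encRp {Q α : Type*} (M : Minsky Q) (σ1 σ2 : ℕ → α) (σQ : Q → α)
    (σI σIc : M.I → α) : Set (α × Option α × α) :=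
  {t | (∃ x : M.I, t = (σI x, some (σQ x.val.1), σIc x)) ∨
    (∃ x : M.I, ∃ n : ℕ, x.val.2.2.2 = none ∧
      t = (σIc x, some (sigC σ1 σ2 x.val.2.1 n), sigC σ1 σ2 x.val.2.1 (n + 1))) ∨
    (∃ x : M.I, ∃ n : ℕ, 1 ≤ n ∧ (∃ q3 : Q, x.val.2.2.2 = some q3) ∧
      t = (σIc x, some (sigC σ1 σ2 x.val.2.1 n), sigC σ1 σ2 x.val.2.1 (n - 1))) ∨
    (∃ x : M.I, ∃ n : ℕ, x.val.2.2.2 = none ∧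
      t = (sigC σ1 σ2 x.val.2.1 n, some (σIc x), σQ x.val.2.2.1)) ∨
    (∃ x : M.I, ∃ n : ℕ, 1 ≤ n ∧ ∃ q3 : Q, x.val.2.2.2 = some q3 ∧
      t = (sigC σ1 σ2 x.val.2.1 n, some (σIc x), σQ q3)) ∨
    (∃ x : M.I, ∃ q3 : Q, x.val.2.2.2 = some q3 ∧
      t = (sigC σ1 σ2 x.val.2.1 0, some (σIc x), σQ x.val.2.2.1))}

/-- The APA encoding of a two-counter Minsky machine `M`, over the argument
type `α` (playing the role of the class `A` of arguments): injective maps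
`σ1, σ2, σQ, σI, σIc` with pairwise disjoint ranges covering `α`, an empty
attack relation, the persuasion relation `encRp`, and the initial set
`{σ1 n1, σ2 n2, σQ q0} ∪ A^I`. -/
structure Encoding {Q : Type*} (M : Minsky Q) (α : Type*) extends APA α where
  σ1 : ℕ → α
  σ2 : ℕ → α
  σQ : Q → α
  σI : M.I → α
  σIc : M.I → α
  inj1 : Function.Injective σ1
  inj2 : Function.Injective σ2
  injQ : Function.Injective σQ
  injI : Function.Injective σI
  injIc : Function.Injective σIc
  disjoint_ranges : List.Pairwise Disjoint
    [Set.range σ1, Set.range σ2, Set.range σQ, Set.range σI, Set.range σIc]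
  ranges_cover : Set.range σ1 ∪ Set.range σ2 ∪ Set.range σQ ∪
    Set.range σI ∪ Set.range σIc = Set.univ
  R_empty : toAPA.R = ∅
  Rp_spec : toAPA.Rp = encRp M σ1 σ2 σQ σI σIc
  A0_spec : toAPA.A0 = {σ1 M.n1, σ2 M.n2, σQ M.q0} ∪ Set.range σI

/-- The set of visible arguments of the APA state `F(A^I ∪ {σQ q, σ1 m1, σ2 m2})`
corresponding to the Minsky machine configuration `(q, m1, m2)`. -/
def encState {Q α : Type*} {M : Minsky Q} (E : Encoding M α)
    (q : Q) (m1 m2 : ℕ) : Set α :=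
  Set.range E.σI ∪ {E.σQ q, E.σ1 m1, E.σ2 m2}

/-- The set of visible arguments of the intermediate APA state
`F(A^I ∪ {σIc x, σ1 m1, σ2 m2})`. -/
def encStateC {Q α : Type*} {M : Minsky Q} (E : Encoding M α)
    (x : M.I) (m1 m2 : ℕ) : Set α :=
  Set.range E.σI ∪ {E.σIc x, E.σ1 m1, E.σ2 m2}

/-!
A configuration `(q, m1, m2)` is mirrored by the visible set `A^I ∪ {σQ q, σ1 m1, σ2 m2}`.
A machine step by the instruction `x` takes two transitions. First `σI x`, which is always
visible, converts `σQ q` into `σIc x`. Then `σIc x` and the visible counter argument convert each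
other simultaneously into the updated counter argument and the next state argument; on a
successful zero test `σi 0` alone converts `σIc x` into the next state argument. The attack
relation is empty, so no reference set can block a conversion.
-/

lemma Minsky.StepN.reflTransGen {Q : Type*} {M : Minsky Q} :
    ∀ {k : ℕ} {c c' : Q × ℕ × ℕ}, M.StepN k c c' → Relation.ReflTransGen M.Step c c'
  | 0, _, _, h => h ▸ .refl
  | _ + 1, _, _, ⟨_, hstep, hrest⟩ => .head hstep hrest.reflTransGen

namespace APA

variable {α : Type*} {A1 : Set α} {a b c d : α}

lemma neg_union (Γ Γ' : Set (α × Option α × α)) :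
    neg A1 (Γ ∪ Γ') = neg A1 Γ ∪ neg A1 Γ' := by
  ext; simp only [neg, Set.mem_union, Set.mem_ofPred_eq]; grind

lemma pos_union (Γ Γ' : Set (α × Option α × α)) :
    pos A1 (Γ ∪ Γ') = pos A1 Γ ∪ pos A1 Γ' := by
  ext; simp only [pos, Set.mem_union, Set.mem_ofPred_eq]; grind

lemma neg_singleton_conversion (ha : a ∈ A1) (hb : b ∈ A1) :
    neg A1 {(a, some b, c)} = {b} := by
  ext x
  simp only [neg, Set.mem_singleton_iff, Set.mem_ofPred_eq, Prod.mk.injEq, Option.some.injEq]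
  exact ⟨fun ⟨_, _, _, _, _, hx, _⟩ => hx,
    fun hx => ⟨hx ▸ hb, a, ha, c, rfl, hx, rfl⟩⟩

lemma pos_singleton_conversion (ha : a ∈ A1) (hb : b ∈ A1) :
    pos A1 {(a, some b, c)} = {c} := by
  ext x
  simp only [pos, Set.mem_singleton_iff, Set.mem_ofPred_eq, Prod.mk.injEq]
  refine ⟨fun ⟨_, _, _, _, _, _, hx⟩ => hx, fun hx => ⟨a, ha, some b, ?_, rfl, rfl, hx⟩⟩
  simpa using hb

variable (F : APA α) {Ax : Set α}

lemma mem_gamma_of_conversion (h : (a, some b, c) ∈ F.Rp) (ha : a ∈ A1) (hb : b ∈ A1)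
    (hfree : ∀ e ∈ Ax, ¬ F.Attacks A1 e a) : (a, some b, c) ∈ F.gamma Ax A1 :=
  ⟨h, ha, by simpa using hb, hfree⟩

lemma trans_conversion (h : (a, some b, c) ∈ F.Rp) (ha : a ∈ A1) (hb : b ∈ A1)
    (hfree : ∀ e ∈ Ax, ¬ F.Attacks A1 e a) : F.Trans Ax A1 (A1 \ {b} ∪ {c}) := by
  refine ⟨{(a, some b, c)}, Set.singleton_nonempty _, ?_, ?_⟩
  · simpa using F.mem_gamma_of_conversion h ha hb hfree
  · rw [neg_singleton_conversion ha hb, pos_singleton_conversion ha hb]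

lemma trans_conversion_pair (h₁ : (a, some b, c) ∈ F.Rp) (h₂ : (b, some a, d) ∈ F.Rp)
    (ha : a ∈ A1) (hb : b ∈ A1) (hfree_a : ∀ e ∈ Ax, ¬ F.Attacks A1 e a)
    (hfree_b : ∀ e ∈ Ax, ¬ F.Attacks A1 e b) : F.Trans Ax A1 (A1 \ {b, a} ∪ {c, d}) := by
  refine ⟨{(a, some b, c)} ∪ {(b, some a, d)}, by simp, ?_, ?_⟩
  · simpa [Set.insert_subset_iff] using
      ⟨F.mem_gamma_of_conversion h₂ hb ha hfree_b,
        F.mem_gamma_of_conversion h₁ ha hb hfree_a⟩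
  · rw [neg_union, pos_union, neg_singleton_conversion ha hb, neg_singleton_conversion hb ha,
      pos_singleton_conversion ha hb, pos_singleton_conversion hb ha]
    rfl

lemma not_attacks_of_R_eq_empty (hR : F.R = ∅) (A1 : Set α) (a b : α) :
    ¬ F.Attacks A1 a b := by
  simp [Attacks, hR]

end APA

namespace Encoding

variable {Q α : Type*} {M : Minsky Q} (E : Encoding M α)

lemma σ1_ne_σ2 (n m : ℕ) : E.σ1 n ≠ E.σ2 m :=
  Set.disjoint_range_iff.mp
    (E.disjoint_ranges.rel_get_of_lt (a := 0) (b := 1) (by rw [Fin.lt_def]; simp)) n m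

lemma σ1_ne_σQ (n : ℕ) (q : Q) : E.σ1 n ≠ E.σQ q :=
  Set.disjoint_range_iff.mp
    (E.disjoint_ranges.rel_get_of_lt (a := 0) (b := 2) (by rw [Fin.lt_def]; simp)) n q

lemma σ1_ne_σI (n : ℕ) (y : M.I) : E.σ1 n ≠ E.σI y :=
  Set.disjoint_range_iff.mp
    (E.disjoint_ranges.rel_get_of_lt (a := 0) (b := 3) (by rw [Fin.lt_def]; simp)) n y

lemma σ1_ne_σIc (n : ℕ) (y : M.I) : E.σ1 n ≠ E.σIc y :=
  Set.disjoint_range_iff.mp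
    (E.disjoint_ranges.rel_get_of_lt (a := 0) (b := 4) (by rw [Fin.lt_def]; simp)) n y

lemma σ2_ne_σQ (n : ℕ) (q : Q) : E.σ2 n ≠ E.σQ q :=
  Set.disjoint_range_iff.mp
    (E.disjoint_ranges.rel_get_of_lt (a := 1) (b := 2) (by rw [Fin.lt_def]; simp)) n q

lemma σ2_ne_σI (n : ℕ) (y : M.I) : E.σ2 n ≠ E.σI y :=
  Set.disjoint_range_iff.mp
    (E.disjoint_ranges.rel_get_of_lt (a := 1) (b := 3) (by rw [Fin.lt_def]; simp)) n y

lemma σ2_ne_σIc (n : ℕ) (y : M.I) : E.σ2 n ≠ E.σIc y :=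
  Set.disjoint_range_iff.mp
    (E.disjoint_ranges.rel_get_of_lt (a := 1) (b := 4) (by rw [Fin.lt_def]; simp)) n y

lemma σQ_ne_σI (q : Q) (y : M.I) : E.σQ q ≠ E.σI y :=
  Set.disjoint_range_iff.mp
    (E.disjoint_ranges.rel_get_of_lt (a := 2) (b := 3) (by rw [Fin.lt_def]; simp)) q y

lemma σI_ne_σIc (y z : M.I) : E.σI y ≠ E.σIc z :=
  Set.disjoint_range_iff.mp
    (E.disjoint_ranges.rel_get_of_lt (a := 3) (b := 4) (by rw [Fin.lt_def]; simp)) y z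

lemma not_attacks (A1 : Set α) (a b : α) : ¬ E.Attacks A1 a b :=
  E.not_attacks_of_R_eq_empty E.R_empty A1 a b

lemma mem_Rp_activate (x : M.I) : (E.σI x, some (E.σQ x.1.1), E.σIc x) ∈ E.Rp := by
  rw [E.Rp_spec]; exact Or.inl ⟨x, rfl⟩

lemma mem_Rp_inc_counter (x : M.I) (hx : x.1.2.2.2 = none) (n : ℕ) :
    (E.σIc x, some (sigC E.σ1 E.σ2 x.1.2.1 n), sigC E.σ1 E.σ2 x.1.2.1 (n + 1)) ∈ E.Rp := by
  rw [E.Rp_spec]; exact Or.inr (Or.inl ⟨x, n, hx, rfl⟩)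

lemma mem_Rp_dec_counter {q3 : Q} (x : M.I) (hx : x.1.2.2.2 = some q3) {n : ℕ} (hn : 1 ≤ n) :
    (E.σIc x, some (sigC E.σ1 E.σ2 x.1.2.1 n), sigC E.σ1 E.σ2 x.1.2.1 (n - 1)) ∈ E.Rp := by
  rw [E.Rp_spec]; exact Or.inr (Or.inr (Or.inl ⟨x, n, hn, ⟨q3, hx⟩, rfl⟩))

lemma mem_Rp_inc_state (x : M.I) (hx : x.1.2.2.2 = none) (n : ℕ) :
    (sigC E.σ1 E.σ2 x.1.2.1 n, some (E.σIc x), E.σQ x.1.2.2.1) ∈ E.Rp := by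
  rw [E.Rp_spec]; exact Or.inr (Or.inr (Or.inr (Or.inl ⟨x, n, hx, rfl⟩)))

lemma mem_Rp_dec_state {q3 : Q} (x : M.I) (hx : x.1.2.2.2 = some q3) {n : ℕ} (hn : 1 ≤ n) :
    (sigC E.σ1 E.σ2 x.1.2.1 n, some (E.σIc x), E.σQ q3) ∈ E.Rp := by
  rw [E.Rp_spec]; exact Or.inr (Or.inr (Or.inr (Or.inr (Or.inl ⟨x, n, hn, q3, hx, rfl⟩))))

lemma mem_Rp_zero_state {q3 : Q} (x : M.I) (hx : x.1.2.2.2 = some q3) :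
    (sigC E.σ1 E.σ2 x.1.2.1 0, some (E.σIc x), E.σQ x.1.2.2.1) ∈ E.Rp := by
  rw [E.Rp_spec]; exact Or.inr (Or.inr (Or.inr (Or.inr (Or.inr ⟨x, q3, hx, rfl⟩))))

variable (Ax : Set α)

lemma trans_activate (x : M.I) (m1 m2 : ℕ) :
    E.Trans Ax (encState E x.1.1 m1 m2) (encStateC E x m1 m2) := by
  convert E.trans_conversion (A1 := encState E x.1.1 m1 m2) (E.mem_Rp_activate x)
    (by simp [encState]) (by simp [encState]) (fun _ _ => E.not_attacks _ _ _) using 1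
  ext a
  simp only [encState, encStateC, Set.mem_union, Set.mem_sdiff, Set.mem_insert_iff,
    Set.mem_singleton_iff, Set.mem_range]
  grind [σ1_ne_σQ, σ2_ne_σQ, σQ_ne_σI, σI_ne_σIc]

lemma trans_counter1 {x : M.I} {m1 m1' m2 : ℕ} {q' : Q}
    (h₁ : (E.σIc x, some (E.σ1 m1), E.σ1 m1') ∈ E.Rp)
    (h₂ : (E.σ1 m1, some (E.σIc x), E.σQ q') ∈ E.Rp) :
    E.Trans Ax (encStateC E x m1 m2) (encState E q' m1' m2) := by
  convert E.trans_conversion_pair (A1 := encStateC E x m1 m2) h₁ h₂ (by simp [encStateC])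
    (by simp [encStateC]) (fun _ _ => E.not_attacks _ _ _) (fun _ _ => E.not_attacks _ _ _) using 1
  ext a
  simp only [encState, encStateC, Set.mem_union, Set.mem_sdiff, Set.mem_insert_iff,
    Set.mem_singleton_iff, Set.mem_range]
  grind [σ1_ne_σ2, σ1_ne_σI, σ2_ne_σIc, σI_ne_σIc]

lemma trans_counter2 {x : M.I} {m1 m2 m2' : ℕ} {q' : Q}
    (h₁ : (E.σIc x, some (E.σ2 m2), E.σ2 m2') ∈ E.Rp)
    (h₂ : (E.σ2 m2, some (E.σIc x), E.σQ q') ∈ E.Rp) :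
    E.Trans Ax (encStateC E x m1 m2) (encState E q' m1 m2') := by
  convert E.trans_conversion_pair (A1 := encStateC E x m1 m2) h₁ h₂ (by simp [encStateC])
    (by simp [encStateC]) (fun _ _ => E.not_attacks _ _ _) (fun _ _ => E.not_attacks _ _ _) using 1
  ext a
  simp only [encState, encStateC, Set.mem_union, Set.mem_sdiff, Set.mem_insert_iff,
    Set.mem_singleton_iff, Set.mem_range]
  grind [σ1_ne_σ2, σ2_ne_σI, σ1_ne_σIc, σI_ne_σIc]

lemma trans_jump {x : M.I} {m1 m2 : ℕ} {b : α} {q' : Q} (hb : b ∈ encStateC E x m1 m2)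
    (h : (b, some (E.σIc x), E.σQ q') ∈ E.Rp) :
    E.Trans Ax (encStateC E x m1 m2) (encState E q' m1 m2) := by
  convert E.trans_conversion h hb (by simp [encStateC]) (fun _ _ => E.not_attacks _ _ _) using 1
  ext a
  simp only [encState, encStateC, Set.mem_union, Set.mem_sdiff, Set.mem_insert_iff,
    Set.mem_singleton_iff, Set.mem_range]
  grind [σ1_ne_σIc, σ2_ne_σIc, σI_ne_σIc]

lemma reflTransGen_trans_of_step {c c' : Q × ℕ × ℕ} (h : M.Step c c') :
    Relation.ReflTransGen (E.Trans Ax) (encState E c.1 c.2.1 c.2.2)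
      (encState E c'.1 c'.2.1 c'.2.2) := by
  cases h with
  | @inc1 _ _ m1 m2 hx =>
    exact .head (E.trans_activate Ax ⟨_, hx⟩ m1 m2) (.single (E.trans_counter1 Ax
      (E.mem_Rp_inc_counter ⟨_, hx⟩ rfl m1) (E.mem_Rp_inc_state ⟨_, hx⟩ rfl m1)))
  | @inc2 _ _ m1 m2 hx =>
    exact .head (E.trans_activate Ax ⟨_, hx⟩ m1 m2) (.single (E.trans_counter2 Ax
      (E.mem_Rp_inc_counter ⟨_, hx⟩ rfl m2) (E.mem_Rp_inc_state ⟨_, hx⟩ rfl m2)))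
  | @dec1 _ _ _ m1 m2 hx hm =>
    exact .head (E.trans_activate Ax ⟨_, hx⟩ m1 m2) (.single (E.trans_counter1 Ax
      (E.mem_Rp_dec_counter ⟨_, hx⟩ rfl hm) (E.mem_Rp_dec_state ⟨_, hx⟩ rfl hm)))
  | @dec2 _ _ _ m1 m2 hx hm =>
    exact .head (E.trans_activate Ax ⟨_, hx⟩ m1 m2) (.single (E.trans_counter2 Ax
      (E.mem_Rp_dec_counter ⟨_, hx⟩ rfl hm) (E.mem_Rp_dec_state ⟨_, hx⟩ rfl hm)))
  | @zero1 _ _ _ m2 hx =>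
    exact .head (E.trans_activate Ax ⟨_, hx⟩ 0 m2) (.single (E.trans_jump Ax
      (by simp [encStateC, sigC]) (E.mem_Rp_zero_state ⟨_, hx⟩ rfl)))
  | @zero2 _ _ _ m1 hx =>
    exact .head (E.trans_activate Ax ⟨_, hx⟩ m1 0) (.single (E.trans_jump Ax
      (by simp [encStateC, sigC]) (E.mem_Rp_zero_state ⟨_, hx⟩ rfl)))

end Encoding

theorem apa_encoding_simulates_minsky_general {Q α : Type*}
    (M : Minsky Q) (E : Encoding M α) (q q' : Q) (m1 m2 m1' m2' k : ℕ)
    (h : M.StepN k (q, m1, m2) (q', m1', m2')) (Ax : Set α) :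
    Relation.ReflTransGen (E.toAPA.Trans Ax)
      (encState E q m1 m2) (encState E q' m1' m2') :=
  Relation.ReflTransGen.lift' (fun c : Q × ℕ × ℕ => encState E c.1 c.2.1 c.2.2)
    (fun _ _ => E.reflTransGen_trans_of_step Ax) _ _ h.reflTransGen

/-- if `⇒^k((q, m1, m2)) = (q', m1', m2')` then there is a finite
sequence of APA transitions (w.r.t. an arbitrary reference set `Ax`) from
`F(A^I ∪ {σQ q, σ1 m1, σ2 m2})` to `F(A^I ∪ {σQ q', σ1 m1', σ2 m2'})`:
the APA encoding simulates `M`. -/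
theorem apa_encoding_simulates_minsky {Q α : Type*} [Finite Q]
    (M : Minsky Q) (E : Encoding M α) (q q' : Q) (m1 m2 m1' m2' k : ℕ)
    (h : M.StepN k (q, m1, m2) (q', m1', m2')) (Ax : Set α) :
    Relation.ReflTransGen (E.toAPA.Trans Ax)
      (encState E q m1 m2) (encState E q' m1' m2') :=
  apa_encoding_simulates_minsky_general M E q q' m1 m2 m1' m2' k h Ax
end

section
/- Let M = (Q, n1, n2, ⇒, q0, qf, I) be a two-counter Minsky machine and let (A, R, Rp, A0, ↪) be its APA encoding. For all m1, m2 ∈ ℕ, there is no reference set Ax ⊆ A and no set A2 ⊆ A such that F(A^I ∪ {σQ(qf), σ1(m1), σ2(m2)}) ↪^{Ax} F(A2); i.e., the APA state corresponding to the halting state qf has no outgoing transitions. -/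
/- In the halting state no argument of `A^Ic` is visible, and every persuasion except those
of kind (i) starts from or converts such an argument. A persuasion of kind (i) for the
instruction `(q1, i, q2, u)` converts `σQ q1`, but the only visible state argument is `σQ qf`,
and `q1 ≠ qf`. -/

lemma encRp_converts_σQ_or_involves_σIc {Q α : Type*} {M : Minsky Q} {σ1 σ2 : ℕ → α}
    {σQ : Q → α} {σI σIc : M.I → α} {t : α × Option α × α}
    (ht : t ∈ encRp M σ1 σ2 σQ σI σIc) :
    (∃ x : M.I, t.2.1 = some (σQ x.val.1)) ∨
      ∃ x : M.I, t.1 = σIc x ∨ t.2.1 = some (σIc x) := by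
  rcases ht with ⟨x, rfl⟩ | ⟨x, n, -, rfl⟩ | ⟨x, n, -, -, rfl⟩ |
      ⟨x, n, -, rfl⟩ | ⟨x, n, -, q3, -, rfl⟩ | ⟨x, q3, -, rfl⟩
  exacts [.inl ⟨x, rfl⟩, .inr ⟨x, .inl rfl⟩, .inr ⟨x, .inl rfl⟩, .inr ⟨x, .inr rfl⟩,
    .inr ⟨x, .inr rfl⟩, .inr ⟨x, .inr rfl⟩]

namespace Encoding

variable {Q α : Type*} {M : Minsky Q} (E : Encoding M α)

lemma apply_ne_of_disjoint_ranges :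
    (∀ m x, E.σ1 m ≠ E.σQ x) ∧ (∀ m x, E.σ1 m ≠ E.σIc x) ∧
    (∀ m x, E.σ2 m ≠ E.σQ x) ∧ (∀ m x, E.σ2 m ≠ E.σIc x) ∧
    (∀ q x, E.σQ q ≠ E.σI x) ∧ (∀ q x, E.σQ q ≠ E.σIc x) ∧ (∀ x y, E.σI x ≠ E.σIc y) := by
  have h := E.disjoint_ranges
  simp only [List.pairwise_cons, List.mem_cons, List.not_mem_nil, or_false, forall_eq_or_imp,
    forall_eq, Set.disjoint_range_iff] at h
  tauto

lemma σIc_notMem_encState (x : M.I) (q : Q) (m1 m2 : ℕ) : E.σIc x ∉ encState E q m1 m2 := by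
  obtain ⟨-, h1, -, h2, -, hQ, hI⟩ := E.apply_ne_of_disjoint_ranges
  rintro (⟨y, hy⟩ | hx | hx | hx)
  exacts [hI y x hy, hQ q x hx.symm, h1 m1 x hx.symm, h2 m2 x hx.symm]

lemma eq_of_σQ_mem_encState {q' q : Q} {m1 m2 : ℕ} (h : E.σQ q' ∈ encState E q m1 m2) :
    q' = q := by
  obtain ⟨h1, -, h2, -, hI, -⟩ := E.apply_ne_of_disjoint_ranges
  rcases h with ⟨y, hy⟩ | hq | hq | hq
  exacts [(hI q' y hy.symm).elim, E.injQ hq, (h1 m1 q' hq.symm).elim,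
    (h2 m2 q' hq.symm).elim]

end Encoding

theorem halting_state_has_no_outgoing_transition_general {Q α : Type*}
    (M : Minsky Q) (E : Encoding M α) (m1 m2 : ℕ) (Ax A2 : Set α) :
    ¬ E.toAPA.Trans Ax (encState E M.qf m1 m2) A2 := by
  rintro ⟨Γ, ⟨t, ht⟩, hΓ, -⟩
  obtain ⟨hRp, hsrc, hmid, -⟩ := hΓ ht
  rw [E.Rp_spec] at hRp
  rcases encRp_converts_σQ_or_involves_σIc hRp with ⟨x, hx⟩ | ⟨x, hx | hx⟩
  · exact M.I_src x.val x.property (E.eq_of_σQ_mem_encState (hmid _ hx))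
  · exact E.σIc_notMem_encState x M.qf m1 m2 (hx ▸ hsrc)
  · exact E.σIc_notMem_encState x M.qf m1 m2 (hmid _ hx)

/-- the APA state corresponding to the halting state `qf`
has no outgoing transitions, whatever the reference set. -/
theorem halting_state_has_no_outgoing_transition {Q α : Type*} [Finite Q]
    (M : Minsky Q) (E : Encoding M α) (m1 m2 : ℕ) (Ax A2 : Set α) :
    ¬ E.toAPA.Trans Ax (encState E M.qf m1 m2) A2 :=
  halting_state_has_no_outgoing_transition_general M E m1 m2 Ax A2
end

section
/- Let M be a two-counter Minsky machine with instruction set I and let (A, R, Rp, A0, ↪) be its APA encoding. If x = (q1, 1, q2, ε) ∈ I, then for all m1, m2 ∈ ℕ and every reference set Ax ⊆ A there exist two consecutive APA transitions F(A^I ∪ {σQ(q1), σ1(m1), σ2(m2)}) ↪^{Ax} F(A^I ∪ {σIc(x), σ1(m1), σ2(m2)}) ↪^{Ax} F(A^I ∪ {σQ(q2), σ1(m1+1), σ2(m2)}), simulating the increment of the first counter. -/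
/-!
The encoding has no attacks, so every persuasion whose source and persuader are visible may
fire. The first transition fires `(σI x, σQ q1, σIc x)` alone, trading `σQ q1` for `σIc x`.
The second fires `(σIc x, σ1 m1, σ1 (m1 + 1))` and `(σ1 m1, σIc x, σQ q2)` together: each one
persuades away the other's source, so `σIc x` and `σ1 m1` give way to `σ1 (m1 + 1)` and
`σQ q2`. Disjointness of the ranges of the `σ`'s guarantees that nothing else in the state
is touched.
-/

namespace APA

variable {α : Type*} {F : APA α} {Ax A1 : Set α} {Γ : Set (α × Option α × α)}

theorem mem_gamma_of_R_eq_empty (hR : F.R = ∅) {a b c : α} (hRp : (a, some b, c) ∈ F.Rp)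
    (ha : a ∈ A1) (hb : b ∈ A1) : (a, some b, c) ∈ F.gamma Ax A1 :=
  ⟨hRp, ha, fun _ h => Option.some.inj h ▸ hb, fun _ _ h => by simpa [hR] using h.2.2⟩

theorem neg_eq_of_subset_gamma (hΓ : Γ ⊆ F.gamma Ax A1) :
    neg A1 Γ = {b | ∃ a c, (a, some b, c) ∈ Γ} := by
  ext b
  constructor
  · rintro ⟨-, a, -, c, h⟩
    exact ⟨a, c, h⟩
  · rintro ⟨a, c, h⟩
    exact ⟨(hΓ h).2.2.1 b rfl, a, (hΓ h).2.1, c, h⟩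

theorem pos_eq_of_subset_gamma (hΓ : Γ ⊆ F.gamma Ax A1) :
    pos A1 Γ = (fun t => t.2.2) '' Γ := by
  ext c
  constructor
  · rintro ⟨a, -, m, -, h⟩
    exact ⟨(a, m, c), h, rfl⟩
  · rintro ⟨⟨a, m, c⟩, h, rfl⟩
    exact ⟨a, (hΓ h).2.1, m, (hΓ h).2.2.1, h⟩

theorem trans_of_subset_gamma (hne : Γ.Nonempty) (hΓ : Γ ⊆ F.gamma Ax A1) :
    F.Trans Ax A1 ((A1 \ {b | ∃ a c, (a, some b, c) ∈ Γ}) ∪ (fun t => t.2.2) '' Γ) :=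
  ⟨Γ, hne, hΓ, by rw [neg_eq_of_subset_gamma hΓ, pos_eq_of_subset_gamma hΓ]⟩

theorem trans_singleton (hR : F.R = ∅) {a b c : α} (hRp : (a, some b, c) ∈ F.Rp)
    (ha : a ∈ A1) (hb : b ∈ A1) : F.Trans Ax A1 ((A1 \ {b}) ∪ {c}) := by
  have hneg : {x | ∃ a' c', (a', some x, c') ∈ ({(a, some b, c)} : Set (α × Option α × α))} =
      {b} := by
    ext x
    simp
  have h := trans_of_subset_gamma (Set.singleton_nonempty _)
    (Set.singleton_subset_iff.mpr (mem_gamma_of_R_eq_empty (Ax := Ax) hR hRp ha hb))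
  rwa [hneg, Set.image_singleton] at h

theorem trans_pair (hR : F.R = ∅) {a b c d : α} (hRp₁ : (a, some b, c) ∈ F.Rp)
    (hRp₂ : (b, some a, d) ∈ F.Rp) (ha : a ∈ A1) (hb : b ∈ A1) :
    F.Trans Ax A1 ((A1 \ {a, b}) ∪ {c, d}) := by
  have hneg : {x | ∃ a' c', (a', some x, c') ∈
      ({(a, some b, c), (b, some a, d)} : Set (α × Option α × α))} = {a, b} := by
    ext x
    simp only [Set.mem_insert_iff, Set.mem_singleton_iff, Prod.mk.injEq, Option.some.injEq]
    grind
  have h := trans_of_subset_gamma (Set.insert_nonempty _ _)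
    (Set.insert_subset (mem_gamma_of_R_eq_empty (Ax := Ax) hR hRp₁ ha hb)
      (Set.singleton_subset_iff.mpr (mem_gamma_of_R_eq_empty hR hRp₂ hb ha)))
  rwa [hneg, Set.image_insert_eq, Set.image_singleton] at h

end APA

namespace Encoding

variable {Q α : Type*} {M : Minsky Q} (E : Encoding M α)

theorem ranges_pairwise_disjoint :
    Disjoint (Set.range E.σ1) (Set.range E.σ2) ∧ Disjoint (Set.range E.σ1) (Set.range E.σQ) ∧
    Disjoint (Set.range E.σ1) (Set.range E.σI) ∧ Disjoint (Set.range E.σ1) (Set.range E.σIc) ∧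
    Disjoint (Set.range E.σ2) (Set.range E.σQ) ∧ Disjoint (Set.range E.σ2) (Set.range E.σI) ∧
    Disjoint (Set.range E.σ2) (Set.range E.σIc) ∧ Disjoint (Set.range E.σQ) (Set.range E.σI) ∧
    Disjoint (Set.range E.σQ) (Set.range E.σIc) ∧ Disjoint (Set.range E.σI) (Set.range E.σIc) := by
  simpa [and_assoc] using E.disjoint_ranges

theorem instr_mem_Rp (x : M.I) : (E.σI x, some (E.σQ x.val.1), E.σIc x) ∈ E.Rp := by
  rw [E.Rp_spec]
  exact Or.inl ⟨x, rfl⟩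

theorem inc_counter_mem_Rp (x : M.I) (hx : x.val.2.2.2 = none) (n : ℕ) :
    (E.σIc x, some (sigC E.σ1 E.σ2 x.val.2.1 n), sigC E.σ1 E.σ2 x.val.2.1 (n + 1)) ∈ E.Rp := by
  rw [E.Rp_spec]
  exact Or.inr (Or.inl ⟨x, n, hx, rfl⟩)

theorem inc_state_mem_Rp (x : M.I) (hx : x.val.2.2.2 = none) (n : ℕ) :
    (sigC E.σ1 E.σ2 x.val.2.1 n, some (E.σIc x), E.σQ x.val.2.2.1) ∈ E.Rp := by
  rw [E.Rp_spec]
  exact Or.inr (Or.inr (Or.inr (Or.inl ⟨x, n, hx, rfl⟩)))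

theorem trans_encState_encStateC (Ax : Set α) (x : M.I) (m1 m2 : ℕ) :
    E.Trans Ax (encState E x.val.1 m1 m2) (encStateC E x m1 m2) := by
  obtain ⟨-, h1Q, -, -, h2Q, -, -, hQI, -, -⟩ := E.ranges_pairwise_disjoint
  rw [Set.disjoint_range_iff] at h1Q h2Q hQI
  convert APA.trans_singleton (A1 := encState E x.val.1 m1 m2) E.R_empty (E.instr_mem_Rp x)
    (by simp [encState]) (by simp [encState]) using 1
  ext a
  simp only [encState, encStateC, Set.mem_union, Set.mem_sdiff, Set.mem_insert_iff,
    Set.mem_singleton_iff, Set.mem_range]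
  grind

theorem trans_encStateC_encState_of_inc1 (Ax : Set α) (x : M.I) (h1 : x.val.2.1 = 1)
    (hx : x.val.2.2.2 = none) (m1 m2 : ℕ) :
    E.Trans Ax (encStateC E x m1 m2) (encState E x.val.2.2.1 (m1 + 1) m2) := by
  obtain ⟨h12, -, h1I, -, -, -, h2Ic, -, -, hIIc⟩ := E.ranges_pairwise_disjoint
  rw [Set.disjoint_range_iff] at h12 h1I h2Ic hIIc
  have hinc := E.inc_counter_mem_Rp x hx m1
  have hstate := E.inc_state_mem_Rp x hx m1
  simp only [h1, sigC, if_true] at hinc hstate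
  convert APA.trans_pair (A1 := encStateC E x m1 m2) E.R_empty hinc hstate
    (by simp [encStateC]) (by simp [encStateC]) using 1
  ext a
  simp only [encState, encStateC, Set.mem_union, Set.mem_sdiff, Set.mem_insert_iff,
    Set.mem_singleton_iff, Set.mem_range]
  grind

end Encoding

theorem increment_first_counter_simulated_general {Q α : Type*}
    (M : Minsky Q) (E : Encoding M α) (q1 q2 : Q)
    (hx : (q1, 1, q2, (none : Option Q)) ∈ M.I) (m1 m2 : ℕ) (Ax : Set α) :
    E.toAPA.Trans Ax (encState E q1 m1 m2)
      (encStateC E ⟨(q1, 1, q2, none), hx⟩ m1 m2) ∧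
    E.toAPA.Trans Ax (encStateC E ⟨(q1, 1, q2, none), hx⟩ m1 m2)
      (encState E q2 (m1 + 1) m2) :=
  ⟨E.trans_encState_encStateC Ax ⟨_, hx⟩ m1 m2,
    E.trans_encStateC_encState_of_inc1 Ax ⟨_, hx⟩ rfl rfl m1 m2⟩

/-- simulation of the increment instruction `(q1, 1, q2, ε)`
of the first counter by two consecutive APA transitions. -/
theorem increment_first_counter_simulated {Q α : Type*} [Finite Q]
    (M : Minsky Q) (E : Encoding M α) (q1 q2 : Q)
    (hx : (q1, 1, q2, (none : Option Q)) ∈ M.I) (m1 m2 : ℕ) (Ax : Set α) :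
    E.toAPA.Trans Ax (encState E q1 m1 m2)
      (encStateC E ⟨(q1, 1, q2, none), hx⟩ m1 m2) ∧
    E.toAPA.Trans Ax (encStateC E ⟨(q1, 1, q2, none), hx⟩ m1 m2)
      (encState E q2 (m1 + 1) m2) :=
  increment_first_counter_simulated_general M E q1 q2 hx m1 m2 Ax
end
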